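/- Let μ = res_K(v_{a,δ}) and η = res_K(v_{b,ε}) with μ < η, where b ∈ B(a,δ) and ε > δ. Then t(μ,η) = p_K(Min_K B°(b,δ)); that is, the tangent direction of μ determined by η consists exactly of the minimal polynomials over K of the elements of the open ball B°(b,δ) of minimal degree over K. -/

import Mathlib

open Polynomial

noncomputable section

variable {K Λ : Type*} [Field K] [AddCommGroup Λ] [LinearOrder Λ] [IsOrderedAddMonoid Λ]

/-- `v` is a `Λ∪{∞}`-valued valuation (written additively) on the algebraic closure of `K`
with trivial support: `v b = ⊤ ↔ b = 0`. -/
structure IsValOnField (v : AlgebraicClosure K → WithTop Λ) : Prop where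
  map_mul : ∀ a b, v (a * b) = v a + v b
  min_le_add : ∀ a b, min (v a) (v b) ≤ v (a + b)
  eq_top_iff : ∀ a, v a = ⊤ ↔ a = 0

/-- A valuation on `K[x]` with trivial support whose restriction to `K` is `v`. -/
structure IsValOnPoly (v : AlgebraicClosure K → WithTop Λ)
    (μ : Polynomial K → WithTop Λ) : Prop where
  map_mul : ∀ f g, μ (f * g) = μ f + μ g
  min_le_add : ∀ f g, min (μ f) (μ g) ≤ μ (f + g)
  eq_top_iff : ∀ f, μ f = ⊤ ↔ f = 0
  extends_v : ∀ c : K, μ (C c) = v (algebraMap K (AlgebraicClosure K) c)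

/-- A valuation on `K̄[x]` with trivial support whose restriction to `K̄` is `v`. -/
structure IsValOnPolyBar (v : AlgebraicClosure K → WithTop Λ)
    (ν : Polynomial (AlgebraicClosure K) → WithTop Λ) : Prop where
  map_mul : ∀ f g, ν (f * g) = ν f + ν g
  min_le_add : ∀ f g, min (ν f) (ν g) ≤ ν (f + g)
  eq_top_iff : ∀ f, ν f = ⊤ ↔ f = 0
  extends_v : ∀ c : AlgebraicClosure K, ν (C c) = v c

/-- Restriction `res_K(ν)` of a valuation `ν` on `K̄[x]` to `K[x]`. -/
def resK (ν : Polynomial (AlgebraicClosure K) → WithTop Λ) :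
    Polynomial K → WithTop Λ :=
  fun f => ν (f.map (algebraMap K (AlgebraicClosure K)))

/-- The monomial valuation `v_{a,δ}` on `K̄[x]`:
`v_{a,δ}(Σ c_k (x−a)^k) = min_k (v(c_k) + kδ)`. -/
def monoVal (v : AlgebraicClosure K → WithTop Λ) (a : AlgebraicClosure K) (δ : Λ) :
    Polynomial (AlgebraicClosure K) → WithTop Λ :=
  fun f => (Finset.range (f.natDegree + 1)).inf
    fun k => v ((taylor a f).coeff k) + ((k • δ : Λ) : WithTop Λ)

/-- The closed ball `B(a,δ) = {b ∈ K̄ : v(b−a) ≥ δ}`. -/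
def cBall (v : AlgebraicClosure K → WithTop Λ) (a : AlgebraicClosure K) (δ : Λ) :
    Set (AlgebraicClosure K) := {b | (δ : WithTop Λ) ≤ v (b - a)}

/-- The open ball `B°(a,δ) = {b ∈ K̄ : v(b−a) > δ}`. -/
def oBall (v : AlgebraicClosure K → WithTop Λ) (a : AlgebraicClosure K) (δ : Λ) :
    Set (AlgebraicClosure K) := {b | (δ : WithTop Λ) < v (b - a)}

/-- The decomposition group `𝒟 = {σ ∈ Aut(K̄/K) : v ∘ σ = v}`. -/
def decompGroup (v : AlgebraicClosure K → WithTop Λ) :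
    Set (AlgebraicClosure K ≃ₐ[K] AlgebraicClosure K) := {σ | ∀ a, v (σ a) = v a}

/-- `deg_K c`, the degree of the minimal polynomial of `c` over `K`. -/
def degK (K : Type*) [Field K] (c : AlgebraicClosure K) : ℕ := (minpoly K c).natDegree

/-- `deg_K S = min {deg_K c : c ∈ S}`. -/
def degKSet (K : Type*) [Field K] (S : Set (AlgebraicClosure K)) : ℕ := sInf (degK K '' S)

/-- `Min_K S = {c ∈ S : deg_K c = deg_K S}`. -/
def MinK (K : Type*) [Field K] (S : Set (AlgebraicClosure K)) : Set (AlgebraicClosure K) :=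
  {c ∈ S | degK K c = degKSet K S}

/-- Pointwise order on valuations on a polynomial ring. -/
def valLE {R : Type*} [Semiring R] (μ η : Polynomial R → WithTop Λ) : Prop := ∀ f, μ f ≤ η f

/-- Strict pointwise order on valuations. -/
def valLT {R : Type*} [Semiring R] (μ η : Polynomial R → WithTop Λ) : Prop := valLE μ η ∧ μ ≠ η

/-- `Λ` is a divisible group. -/
def IsDivisible (Λ : Type*) [AddCommGroup Λ] : Prop :=
  ∀ (γ : Λ) (n : ℕ), 0 < n → ∃ γ', n • γ' = γ

/-- `IsEpsilon μ f e` says that `e = ε_μ(f) = max {(μ(f) − μ(∂_s f))/s : s ≥ 1, ∂_s f ≠ 0}`,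
where `∂_s` is the `s`-th Hasse–Schmidt derivative. It is expressed without division:
`μ f ≤ s•e + μ(∂_s f)` for all admissible `s`, with equality for at least one `s`. -/
def IsEpsilon (μ : Polynomial K → WithTop Λ) (f : Polynomial K) (e : Λ) : Prop :=
  (∀ s : ℕ, 1 ≤ s → hasseDeriv s f ≠ 0 →
      μ f ≤ ((s • e : Λ) : WithTop Λ) + μ (hasseDeriv s f)) ∧
  (∃ s : ℕ, 1 ≤ s ∧ hasseDeriv s f ≠ 0 ∧
      μ f = ((s • e : Λ) : WithTop Λ) + μ (hasseDeriv s f))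

/-- `Q` is an abstract key polynomial for `μ`: `Q` is monic and `ε_μ(f) < ε_μ(Q)` for every
nonconstant `f` of degree smaller than `deg Q`. -/
def IsAbstractKeyPol (μ : Polynomial K → WithTop Λ) (Q : Polynomial K) : Prop :=
  Q.Monic ∧ ∀ f : Polynomial K, 0 < f.natDegree → f.natDegree < Q.natDegree →
    ∀ e eQ : Λ, IsEpsilon μ f e → IsEpsilon μ Q eQ → e < eQ

/-- The tangent direction `t(μ,η)`: monic polynomials of smallest degree `φ` with `μ(φ) < η(φ)`. -/
def tangentDir (μ η : Polynomial K → WithTop Λ) : Set (Polynomial K) :=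
  {φ | φ.Monic ∧ μ φ < η φ ∧
    ∀ ψ : Polynomial K, ψ.Monic → μ ψ < η ψ → φ.natDegree ≤ ψ.natDegree}

/-! Since `v_{b,δ}` is multiplicative (Gauss' lemma), a monic `f = ∏ (x - r)` over `K̄` has
`v_{b,δ}(f) = Σ_r min(v(r - b), δ)`, and for `b ∈ B(a,δ)` no term changes when `b` is replaced
by `a`. Comparing with the same sum for `ε > δ`, a monic `φ ∈ K[x]` has `μ(φ) < η(φ)` exactly
when `φ` has a root in `B°(b,δ)`; the monic polynomials of least degree with such a root are the
minimal polynomials of the elements of `B°(b,δ)` of least degree over `K`. -/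

theorem WithTop.multiset_sum_map_min_lt_iff {δ ε : Λ} (hδε : δ < ε) (s : Multiset (WithTop Λ)) :
    (s.map (min · (δ : WithTop Λ))).sum < (s.map (min · (ε : WithTop Λ))).sum ↔
      ∃ x ∈ s, (δ : WithTop Λ) < x := by
  constructor
  · contrapose!
    intro hs
    have hδ : ∀ x ∈ s, min x δ = min x ε := fun x hx =>
      (min_eq_left (hs x hx)).trans (min_eq_left ((hs x hx).trans (by exact_mod_cast hδε.le))).symm
    rw [Multiset.map_congr rfl hδ]
  · rintro ⟨x, hx, hδx⟩
    obtain ⟨t, rfl⟩ := Multiset.exists_cons_of_mem hx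
    rw [Multiset.map_cons, Multiset.map_cons, Multiset.sum_cons, Multiset.sum_cons]
    have hfin : (t.map (min · (δ : WithTop Λ))).sum ≠ ⊤ :=
      Multiset.sum_induction (· ≠ ⊤) _ (fun _ _ ha hb => WithTop.add_ne_top.2 ⟨ha, hb⟩)
        WithTop.zero_ne_top fun y hy => by
          obtain ⟨z, -, rfl⟩ := Multiset.mem_map.1 hy
          exact ne_top_of_le_ne_top WithTop.coe_ne_top (min_le_right _ _)
    refine WithTop.add_lt_add_of_lt_of_le hfin ?_ ?_
    · rw [min_eq_right hδx.le]
      exact lt_min hδx (by exact_mod_cast hδε)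
    · exact Multiset.sum_map_le_sum_map _ _ fun y _ =>
        min_le_min_left _ (by exact_mod_cast hδε.le)

namespace AddValuation

open Finset.HasAntidiagonal

section CommRing

variable {R : Type*} [CommRing R] (w : AddValuation R (WithTop Λ))

theorem min_map_sub_le_of_le {δ : Λ} {a b : R}
    (hab : (δ : WithTop Λ) ≤ w (b - a)) (r : R) :
    min (w (r - b)) δ ≤ min (w (r - a)) δ := by
  refine le_min ?_ (min_le_right _ _)
  calc min (w (r - b)) δ ≤ min (w (r - b)) (w (b - a)) := min_le_min_left _ hab
    _ ≤ w (r - b + (b - a)) := w.map_add _ _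
    _ = w (r - a) := by rw [sub_add_sub_cancel]

theorem min_map_sub_eq_of_le {δ : Λ} {a b : R}
    (hab : (δ : WithTop Λ) ≤ w (b - a)) (r : R) :
    min (w (r - a)) δ = min (w (r - b)) δ :=
  (w.min_map_sub_le_of_le (by rwa [map_sub_swap]) r).antisymm (w.min_map_sub_le_of_le hab r)

variable (δ : Λ)

def gaussVal (f : R[X]) : WithTop Λ :=
  (Finset.range (f.natDegree + 1)).inf fun k => w (f.coeff k) + ((k • δ : Λ) : WithTop Λ)

theorem gaussVal_le (f : R[X]) (k : ℕ) :
    w.gaussVal δ f ≤ w (f.coeff k) + ((k • δ : Λ) : WithTop Λ) := by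
  rcases le_or_gt k f.natDegree with hk | hk
  · exact Finset.inf_le (Finset.mem_range.2 (Nat.lt_succ_of_le hk))
  · simp [coeff_eq_zero_of_natDegree_lt hk]

theorem le_gaussVal_iff {f : R[X]} {γ : WithTop Λ} :
    γ ≤ w.gaussVal δ f ↔ ∀ k, γ ≤ w (f.coeff k) + ((k • δ : Λ) : WithTop Λ) :=
  ⟨fun h k => h.trans (w.gaussVal_le δ f k), fun h => Finset.le_inf fun k _ => h k⟩

theorem exists_gaussVal_eq_and_forall_lt (f : R[X]) :
    ∃ i, w (f.coeff i) + ((i • δ : Λ) : WithTop Λ) = w.gaussVal δ f ∧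
      ∀ j < i, w.gaussVal δ f < w (f.coeff j) + ((j • δ : Λ) : WithTop Λ) := by
  classical
  have hex : ∃ i, w (f.coeff i) + ((i • δ : Λ) : WithTop Λ) = w.gaussVal δ f := by
    obtain ⟨i, -, hi⟩ := Finset.exists_mem_eq_inf (Finset.range (f.natDegree + 1))
      Finset.nonempty_range_add_one fun k => w (f.coeff k) + ((k • δ : Λ) : WithTop Λ)
    exact ⟨i, hi.symm⟩
  exact ⟨Nat.find hex, Nat.find_spec hex, fun j hj =>
    (w.gaussVal_le δ f j).lt_of_ne fun h => Nat.find_min hex hj h.symm⟩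

theorem map_mul_add_nsmul (a b : R) (i j : ℕ) :
    w (a * b) + (((i + j) • δ : Λ) : WithTop Λ) =
      (w a + ((i • δ : Λ) : WithTop Λ)) + (w b + ((j • δ : Λ) : WithTop Λ)) := by
  rw [w.map_mul, add_nsmul, WithTop.coe_add]
  ac_rfl

theorem le_map_sum_add_coe {ι : Type*} (s : Finset ι) (t : ι → R) {γ : WithTop Λ} {c : Λ}
    (h : ∀ i ∈ s, γ ≤ w (t i) + c) : γ ≤ w (∑ i ∈ s, t i) + c := by
  have key : ∀ x : WithTop Λ, γ ≤ x + c ↔ γ + ((-c : Λ) : WithTop Λ) ≤ x := fun x => by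
    constructor
    · intro hx
      calc γ + ((-c : Λ) : WithTop Λ) ≤ x + c + ((-c : Λ) : WithTop Λ) := by gcongr
        _ = x := by rw [add_assoc, ← WithTop.coe_add, add_neg_cancel, WithTop.coe_zero, add_zero]
    · intro hx
      calc γ = γ + ((-c : Λ) : WithTop Λ) + c := by
            rw [add_assoc, ← WithTop.coe_add, neg_add_cancel, WithTop.coe_zero, add_zero]
        _ ≤ x + c := by gcongr
  exact (key _).2 (w.map_le_sum fun i hi => (key _).1 (h i hi))

theorem le_gaussVal_mul (f g : R[X]) :
    w.gaussVal δ f + w.gaussVal δ g ≤ w.gaussVal δ (f * g) := by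
  refine (w.le_gaussVal_iff δ).2 fun n => ?_
  rw [coeff_mul]
  refine w.le_map_sum_add_coe _ _ fun x hx => ?_
  rw [← mem_antidiagonal.1 hx, map_mul_add_nsmul]
  exact add_le_add (w.gaussVal_le δ f _) (w.gaussVal_le δ g _)

theorem gaussVal_mul_le (f g : R[X]) :
    w.gaussVal δ (f * g) ≤ w.gaussVal δ f + w.gaussVal δ g := by
  by_cases hfg : w.gaussVal δ f = ⊤ ∨ w.gaussVal δ g = ⊤
  · rcases hfg with h | h <;> simp [h]
  push Not at hfg
  obtain ⟨i, hi, hi_lt⟩ := w.exists_gaussVal_eq_and_forall_lt δ f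
  obtain ⟨j, hj, hj_lt⟩ := w.exists_gaussVal_eq_and_forall_lt δ g
  have hij : w (f.coeff i * g.coeff j) + (((i + j) • δ : Λ) : WithTop Λ) =
      w.gaussVal δ f + w.gaussVal δ g := by
    rw [map_mul_add_nsmul, hi, hj]
  -- every other product on the antidiagonal has an index below `i` or `j`, so a larger value
  have hother : ∀ x ∈ (antidiagonal (i + j)).erase (i, j),
      w (f.coeff i * g.coeff j) < w (f.coeff x.1 * g.coeff x.2) := by
    rintro ⟨k, l⟩ hx
    obtain ⟨hne, hkl⟩ := Finset.mem_erase.1 hx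
    rw [mem_antidiagonal] at hkl
    rw [← WithTop.add_lt_add_iff_right (WithTop.coe_ne_top (a := (i + j) • δ)), hij, ← hkl,
      map_mul_add_nsmul]
    rcases lt_or_ge k i with hk | hk
    · exact WithTop.add_lt_add_of_lt_of_le hfg.2 (hi_lt k hk) (w.gaussVal_le δ g l)
    · have hl : l < j := by
        by_contra! hl
        exact hne (Prod.ext (by simp only; omega) (by simp only; omega))
      exact WithTop.add_lt_add_of_le_of_lt hfg.1 (w.gaussVal_le δ f k) (hj_lt l hl)
  have hcoeff : w ((f * g).coeff (i + j)) = w (f.coeff i * g.coeff j) := by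
    have hmem : (i, j) ∈ antidiagonal (i + j) := mem_antidiagonal.2 rfl
    rw [coeff_mul, ← Finset.add_sum_erase _ _ hmem]
    refine w.map_add_eq_of_lt_left (w.map_lt_sum ?_ hother)
    intro htop
    rw [htop, top_add] at hij
    exact hfg.1 (WithTop.add_eq_top.1 hij.symm |>.resolve_right hfg.2)
  calc w.gaussVal δ (f * g) ≤ w ((f * g).coeff (i + j)) + (((i + j) • δ : Λ) : WithTop Λ) :=
        w.gaussVal_le δ _ _
    _ = w.gaussVal δ f + w.gaussVal δ g := by rw [hcoeff, hij]

theorem gaussVal_mul (f g : R[X]) :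
    w.gaussVal δ (f * g) = w.gaussVal δ f + w.gaussVal δ g :=
  (w.gaussVal_mul_le δ f g).antisymm (w.le_gaussVal_mul δ f g)

theorem gaussVal_one : w.gaussVal δ (1 : R[X]) = 0 := by
  simp [gaussVal]

theorem gaussVal_multiset_prod (s : Multiset R[X]) :
    w.gaussVal δ s.prod = (s.map (w.gaussVal δ)).sum := by
  induction s using Multiset.induction_on with
  | empty => simp [gaussVal_one]
  | cons f s ih => simp [gaussVal_mul, ih]

theorem gaussVal_X_sub_C [Nontrivial R] (c : R) :
    w.gaussVal δ (X - C c) = min (w c) δ := by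
  simp [gaussVal, Finset.range_add_one, coeff_X, coeff_C, min_comm]

end CommRing

section Field

variable {L : Type*} [Field L] (w : AddValuation L (WithTop Λ))

theorem gaussVal_taylor_of_splits {f : L[X]} (hf : f.Monic) (hs : f.Splits) (δ : Λ) (b : L) :
    w.gaussVal δ (taylor b f) = (f.roots.map fun r => min (w (r - b)) δ).sum := by
  conv_lhs => rw [hs.eq_prod_roots_of_monic hf]
  change w.gaussVal δ (taylorAlgHom b _) = _
  rw [map_multiset_prod, gaussVal_multiset_prod, Multiset.map_map, Multiset.map_map]
  congr 1
  refine Multiset.map_congr rfl fun r _ => ?_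
  change w.gaussVal δ (taylor b (X - C r)) = _
  rw [_root_.map_sub, taylor_X, taylor_C, show X + C b - C r = X - C (r - b) by rw [C_sub]; ring,
    gaussVal_X_sub_C]

theorem gaussVal_taylor_lt_iff {f : L[X]} (hf : f.Monic) (hs : f.Splits) {δ ε : Λ} (hδε : δ < ε)
    (b : L) : w.gaussVal δ (taylor b f) < w.gaussVal ε (taylor b f) ↔
      ∃ r ∈ f.roots, (δ : WithTop Λ) < w (r - b) := by
  rw [gaussVal_taylor_of_splits w hf hs, gaussVal_taylor_of_splits w hf hs]
  simpa [Multiset.map_map] using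
    WithTop.multiset_sum_map_min_lt_iff hδε (f.roots.map fun r => w (r - b))

theorem gaussVal_taylor_eq_of_le {f : L[X]} (hf : f.Monic) (hs : f.Splits) {δ : Λ} {a b : L}
    (hab : (δ : WithTop Λ) ≤ w (b - a)) :
    w.gaussVal δ (taylor a f) = w.gaussVal δ (taylor b f) := by
  simp only [gaussVal_taylor_of_splits w hf hs, w.min_map_sub_eq_of_le hab]

end Field

end AddValuation

namespace IsValOnField

variable {v : AlgebraicClosure K → WithTop Λ} (hv : IsValOnField v)
include hv

theorem map_one : v 1 = 0 := by
  have hne : v 1 ≠ ⊤ := fun h => one_ne_zero ((hv.eq_top_iff 1).1 h)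
  have h := hv.map_mul 1 1
  rw [one_mul] at h
  lift v 1 to Λ using hne with x
  exact_mod_cast left_eq_add.1 (by exact_mod_cast h)

def toAddValuation : AddValuation (AlgebraicClosure K) (WithTop Λ) :=
  AddValuation.of v ((hv.eq_top_iff 0).2 rfl) hv.map_one hv.min_le_add hv.map_mul

theorem monoVal_eq_gaussVal_taylor (b : AlgebraicClosure K) (δ : Λ)
    (f : (AlgebraicClosure K)[X]) :
    monoVal v b δ f = hv.toAddValuation.gaussVal δ (taylor b f) := by
  rw [monoVal, AddValuation.gaussVal, natDegree_taylor]
  rfl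

theorem resK_monoVal_lt_iff {a b : AlgebraicClosure K} {δ ε : Λ} (hb : b ∈ cBall v a δ)
    (hδε : δ < ε) {φ : K[X]} (hφ : φ.Monic) :
    resK (monoVal v a δ) φ < resK (monoVal v b ε) φ ↔ ∃ c ∈ oBall v b δ, aeval c φ = 0 := by
  have hf : (φ.map (algebraMap K (AlgebraicClosure K))).Monic := hφ.map _
  have hs := IsAlgClosed.splits (φ.map (algebraMap K (AlgebraicClosure K)))
  simp only [resK, hv.monoVal_eq_gaussVal_taylor,
    hv.toAddValuation.gaussVal_taylor_eq_of_le hf hs hb,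
    hv.toAddValuation.gaussVal_taylor_lt_iff hf hs hδε, mem_roots hf.ne_zero, IsRoot.def,
    eval_map_algebraMap]
  exact exists_congr fun _ => and_comm

end IsValOnField

omit [AddCommGroup Λ] [IsOrderedAddMonoid Λ] in
theorem tangentDir_eq_setOf_minpoly {μ η : K[X] → WithTop Λ} {S : Set (AlgebraicClosure K)}
    (hS : S.Nonempty) (hroot : ∀ φ : K[X], φ.Monic → (μ φ < η φ ↔ ∃ c ∈ S, aeval c φ = 0)) :
    tangentDir μ η = {φ | ∃ c ∈ MinK K S, φ = minpoly K c} := by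
  have hmonic (c : AlgebraicClosure K) : (minpoly K c).Monic :=
    minpoly.monic (Algebra.IsIntegral.isIntegral c)
  have hmin : ∀ c ∈ S, μ (minpoly K c) < η (minpoly K c) := fun c hc =>
    (hroot _ (hmonic c)).2 ⟨c, hc, minpoly.aeval K c⟩
  have hdegKSet_le : ∀ c ∈ S, degKSet K S ≤ degK K c := fun c hc => Nat.sInf_le ⟨c, hc, rfl⟩
  ext φ
  constructor
  · rintro ⟨hφ, hlt, hleast⟩
    obtain ⟨c, hc, hc0⟩ := (hroot φ hφ).1 hlt
    have hφc : φ = minpoly K c := eq_of_monic_of_dvd_of_natDegree_le (hmonic c) hφ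
      (minpoly.dvd K c hc0) (hleast _ (hmonic c) (hmin c hc))
    obtain ⟨c₀, hc₀, hc₀deg⟩ := Nat.sInf_mem (hS.image (degK K))
    refine ⟨c, ⟨hc, (hdegKSet_le c hc).antisymm' ?_⟩, hφc⟩
    calc degK K c = φ.natDegree := by rw [hφc, degK]
      _ ≤ degK K c₀ := hleast _ (hmonic c₀) (hmin c₀ hc₀)
      _ = degKSet K S := hc₀deg
  · rintro ⟨c, ⟨hc, hcdeg⟩, rfl⟩
    refine ⟨hmonic c, hmin c hc, fun ψ hψ hlt => ?_⟩
    obtain ⟨r, hr, hr0⟩ := (hroot ψ hψ).1 hlt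
    calc (minpoly K c).natDegree = degKSet K S := hcdeg
      _ ≤ degK K r := hdegKSet_le r hr
      _ ≤ ψ.natDegree := natDegree_le_of_dvd (minpoly.dvd K r hr0) hψ.ne_zero

theorem tangentDirEqMinpolys_general
    (v : AlgebraicClosure K → WithTop Λ) (hv : IsValOnField v)
    (a b : AlgebraicClosure K) (δ ε : Λ)
    (hb : b ∈ cBall v a δ) (hδε : δ < ε) :
    tangentDir (resK (monoVal v a δ)) (resK (monoVal v b ε)) =
      {φ : Polynomial K | ∃ c ∈ MinK K (oBall v b δ), φ = minpoly K c} := by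
  have hbb : b ∈ oBall v b δ := by
    simp [oBall, sub_self, (hv.eq_top_iff 0).2 rfl]
  exact tangentDir_eq_setOf_minpoly ⟨b, hbb⟩ fun φ hφ => hv.resK_monoVal_lt_iff hb hδε hφ

/-- if `μ = res_K(v_{a,δ}) < η = res_K(v_{b,ε})` with `b ∈ B(a,δ)` and `ε > δ`,
then `t(μ,η) = p_K(Min_K B°(b,δ))`. -/
theorem tangentDirEqMinpolys
    (v : AlgebraicClosure K → WithTop Λ) (hv : IsValOnField v)
    (hdiv : IsDivisible Λ)
    (a b : AlgebraicClosure K) (δ ε : Λ)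
    (hb : b ∈ cBall v a δ) (hδε : δ < ε)
    (hlt : valLT (resK (monoVal v a δ)) (resK (monoVal v b ε))) :
    tangentDir (resK (monoVal v a δ)) (resK (monoVal v b ε)) =
      {φ : Polynomial K | ∃ c ∈ MinK K (oBall v b δ), φ = minpoly K c} :=
  tangentDirEqMinpolys_general v hv a b δ ε hb hδε
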